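/- For fixed α ∈ (0,1/2), the function β ↦ F(α,β) = 2(α ln(α/(1-β)) + (1-α) ln((1-α)/β)) / (Φ⁻¹(α) + Φ⁻¹(β))² tends to 1 - α as β → 0⁺. -/

import Mathlib

/-!
Write `y = Φ⁻¹(β)`, so `y → -∞` as `β → 0⁺`. The Gaussian tail bounds `φ(y - 1) ≤ Φ(y) ≤ φ(y)`
give `-log β = y² / 2 + O(|y|)`, hence `-log β ~ y² / 2 ~ (Φ⁻¹(α) + y)² / 2`. The numerator of `F`
is `2 (1 - α) (-log β) + O(1)`, so `F(α, β) → 2 (1 - α) / 2 = 1 - α`.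
-/

open Real Set Filter Topology MeasureTheory ProbabilityTheory

noncomputable def phi (y : ℝ) : ℝ := (Real.sqrt (2 * Real.pi))⁻¹ * Real.exp (-y ^ 2 / 2)

noncomputable def Phi (x : ℝ) : ℝ := ∫ y in Set.Iic x, phi y

noncomputable def PhiInv (a : ℝ) : ℝ := Function.invFun Phi a

lemma mul_log_div (a : ℝ) {x : ℝ} (hx : x ≠ 0) : a * log (a / x) = a * log a - a * log x := by
  rcases eq_or_ne a 0 with rfl | ha
  · simp
  · rw [log_div ha hx]; ring

lemma tendsto_add_mul_div_of_tendsto_atTop {ι : Type*} {l : Filter ι} {f g : ι → ℝ} {a : ℝ}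
    (k : ℝ) (hf : Tendsto f l (𝓝 a)) (hg : Tendsto g l atTop) :
    Tendsto (fun i => (f i + k * g i) / g i) l (𝓝 k) := by
  have h := (hf.div_atTop hg).add_const k
  rw [zero_add] at h
  refine h.congr' ?_
  filter_upwards [hg.eventually_gt_atTop 0] with i hi
  field_simp

lemma tendsto_quadratic_div_sq_add_atBot (a b d c : ℝ) :
    Tendsto (fun t : ℝ => (a * t ^ 2 + b * t + d) / (c + t) ^ 2) atBot (𝓝 a) := by
  have hu : Tendsto (fun u : ℝ => (a + b * u + d * u ^ 2) / (1 + c * u) ^ 2) (𝓝 0) (𝓝 a) := by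
    have : ContinuousAt (fun u : ℝ => (a + b * u + d * u ^ 2) / (1 + c * u) ^ 2) 0 := by
      fun_prop (disch := norm_num)
    simpa using this.tendsto
  refine (hu.comp tendsto_inv_atBot_zero).congr' ?_
  filter_upwards [eventually_ne_atBot 0] with t ht
  have hnum : a + b * t⁻¹ + d * t⁻¹ ^ 2 = (a * t ^ 2 + b * t + d) / t ^ 2 := by field_simp
  have hden : (1 + c * t⁻¹) ^ 2 = (c + t) ^ 2 / t ^ 2 := by field_simp; ring
  rw [Function.comp_apply, hnum, hden, div_div_div_cancel_right₀ (pow_ne_zero 2 ht)]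

lemma phi_eq_gaussianPDFReal : phi = gaussianPDFReal 0 1 := by
  ext y
  simp [phi, gaussianPDFReal]

lemma phi_pos (y : ℝ) : 0 < phi y := by
  rw [phi_eq_gaussianPDFReal]
  exact gaussianPDFReal_pos 0 1 y one_ne_zero

lemma integrable_phi : Integrable phi := by
  rw [phi_eq_gaussianPDFReal]
  exact integrable_gaussianPDFReal 0 1

lemma log_phi (y : ℝ) : log (phi y) = -log √(2 * π) - y ^ 2 / 2 := by
  rw [phi, log_mul (by positivity) (exp_ne_zero _), log_inv, log_exp]
  ring

lemma monotoneOn_phi : MonotoneOn phi (Iic 0) := by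
  intro a ha b hb hab
  unfold phi
  gcongr _ * ?_
  exact exp_le_exp.2 (by nlinarith [mem_Iic.1 ha, mem_Iic.1 hb])

lemma tendsto_phi_atBot : Tendsto phi atBot (𝓝 0) := by
  have hsq : Tendsto (fun y : ℝ => -y ^ 2 / 2) atBot atBot := by
    have h := ((tendsto_pow_atTop two_ne_zero).comp tendsto_neg_atBot_atTop).atTop_div_const
      (show (0 : ℝ) < 2 by norm_num)
    exact tendsto_neg_atTop_atBot.comp h |>.congr fun y => by simp [neg_div]
  have h := (tendsto_exp_atBot.comp hsq).const_mul (√(2 * π))⁻¹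
  rwa [mul_zero] at h

lemma Phi_sub_Phi (a b : ℝ) : Phi b - Phi a = ∫ y in a..b, phi y :=
  intervalIntegral.integral_Iic_sub_Iic integrable_phi.integrableOn integrable_phi.integrableOn

lemma Phi_strictMono : StrictMono Phi := fun a b hab => by
  have h := intervalIntegral.intervalIntegral_pos_of_pos integrable_phi.intervalIntegrable
    phi_pos hab
  linarith [Phi_sub_Phi a b]

lemma continuous_Phi : Continuous Phi := by
  have h := intervalIntegral.continuous_primitive
    (fun a b => integrable_phi.intervalIntegrable (a := a) (b := b)) 0
  refine ((continuous_const (y := Phi 0)).add h).congr fun x => ?_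
  show Phi 0 + ∫ y in 0..x, phi y = Phi x
  rw [← Phi_sub_Phi]
  ring

lemma Phi_nonneg (x : ℝ) : 0 ≤ Phi x :=
  setIntegral_nonneg measurableSet_Iic fun y _ => (phi_pos y).le

lemma Phi_pos (x : ℝ) : 0 < Phi x :=
  (Phi_nonneg (x - 1)).trans_lt (Phi_strictMono (sub_one_lt x))

-- On `(-∞, x]` with `x ≤ -1` the density is dominated by `φ(x) e^{y - x}`, of integral `φ(x)`.
lemma Phi_le_phi {x : ℝ} (hx : x ≤ -1) : Phi x ≤ phi x := by
  have hdom : ∀ y ∈ Iic x, phi y ≤ phi x * exp (y - x) := by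
    intro y hy
    rw [phi, phi, mul_assoc, ← exp_add]
    gcongr
    nlinarith [mem_Iic.1 hy]
  have hint : IntegrableOn (fun y => phi x * exp (y - x)) (Iic x) := by
    simpa [exp_sub, mul_div_assoc, IntegrableOn] using
      ((integrableOn_exp_Iic x).div_const (exp x)).const_mul (phi x)
  calc Phi x ≤ ∫ y in Iic x, phi x * exp (y - x) :=
        setIntegral_mono_on integrable_phi.integrableOn hint measurableSet_Iic hdom
    _ = phi x := by
      simp_rw [integral_const_mul, exp_sub, integral_div, integral_exp_Iic,
        div_self (exp_ne_zero x), mul_one]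

lemma phi_sub_one_le_Phi {x : ℝ} (hx : x ≤ 0) : phi (x - 1) ≤ Phi x := by
  have hIcc : phi (x - 1) ≤ ∫ y in Icc (x - 1) x, phi y := by
    have h := setIntegral_ge_of_const_le_real (μ := volume) (s := Icc (x - 1) x) measurableSet_Icc
      (by simp)
      (fun y hy => monotoneOn_phi (mem_Iic.2 (by linarith)) (mem_Iic.2 (hy.2.trans hx)) hy.1)
      integrable_phi.integrableOn
    rwa [Real.volume_real_Icc_of_le (by linarith), sub_sub_cancel, mul_one] at h
  exact hIcc.trans (setIntegral_mono_set integrable_phi.integrableOn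
    (Eventually.of_forall fun y => (phi_pos y).le) (Icc_subset_Iic_self.eventuallyLE))

lemma tendsto_Phi_atBot : Tendsto Phi atBot (𝓝 0) :=
  tendsto_of_tendsto_of_tendsto_of_le_of_le' tendsto_const_nhds tendsto_phi_atBot
    (Eventually.of_forall Phi_nonneg) ((eventually_le_atBot (-1)).mono fun _ => Phi_le_phi)

lemma tendsto_neg_log_Phi_div_sq_add (c : ℝ) :
    Tendsto (fun y => -log (Phi y) / (c + y) ^ 2) atBot (𝓝 (1 / 2)) := by
  set C := log √(2 * π)
  -- `y² / 2 + C ≤ -log Φ(y) ≤ (y - 1)² / 2 + C` by the two tail bounds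
  refine tendsto_of_tendsto_of_tendsto_of_le_of_le'
    (tendsto_quadratic_div_sq_add_atBot (1 / 2) 0 C c)
    (tendsto_quadratic_div_sq_add_atBot (1 / 2) (-1) (1 / 2 + C) c) ?_ ?_
  all_goals
    filter_upwards [eventually_le_atBot (-1)] with y hy
    gcongr
  · have := log_le_log (Phi_pos y) (Phi_le_phi hy)
    linarith [log_phi y]
  · have := log_le_log (phi_pos _) (phi_sub_one_le_Phi (x := y) (by linarith))
    linarith [log_phi (y - 1)]

lemma Ioc_subset_range_Phi : Ioc 0 (Phi 0) ⊆ range Phi := fun _ hβ =>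
  mem_range_of_exists_le_of_exists_ge continuous_Phi
    ((tendsto_Phi_atBot.eventually (eventually_le_nhds hβ.1)).exists) ⟨0, hβ.2⟩

lemma eventually_Phi_PhiInv : ∀ᶠ β in 𝓝[>] 0, Phi (PhiInv β) = β := by
  filter_upwards [Ioo_mem_nhdsGT (Phi_pos 0)] with β hβ
  exact Function.invFun_eq (Ioc_subset_range_Phi (Ioo_subset_Ioc_self hβ))

lemma tendsto_PhiInv_nhdsGT_zero : Tendsto PhiInv (𝓝[>] 0) atBot := by
  refine tendsto_atBot.2 fun M => ?_
  filter_upwards [eventually_Phi_PhiInv, Ioo_mem_nhdsGT (Phi_pos M)] with _ hβ hβM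
  rw [← Phi_strictMono.le_iff_le, hβ]
  exact hβM.2.le

theorem F_limit_beta_zero_general (α : ℝ) :
    Filter.Tendsto
      (fun β : ℝ =>
        2 * (α * Real.log (α / (1 - β)) + (1 - α) * Real.log ((1 - α) / β))
          / (PhiInv α + PhiInv β) ^ 2)
      (𝓝[>] 0) (𝓝 (1 - α)) := by
  set f : ℝ → ℝ := fun β => 2 * (α * log α - α * log (1 - β) + (1 - α) * log (1 - α))
  have hf : Tendsto f (𝓝[>] 0) (𝓝 (f 0)) :=
    (ContinuousAt.tendsto (by fun_prop (disch := norm_num))).mono_left nhdsWithin_le_nhds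
  have hlog : Tendsto (fun β : ℝ => -log β) (𝓝[>] 0) atTop :=
    tendsto_neg_atBot_atTop.comp tendsto_log_nhdsGT_zero
  have hnum := tendsto_add_mul_div_of_tendsto_atTop (2 * (1 - α)) hf hlog
  have hden : Tendsto (fun β => -log β / (PhiInv α + PhiInv β) ^ 2) (𝓝[>] 0) (𝓝 (1 / 2)) := by
    refine ((tendsto_neg_log_Phi_div_sq_add (PhiInv α)).comp tendsto_PhiInv_nhdsGT_zero).congr' ?_
    filter_upwards [eventually_Phi_PhiInv] with β hβ
    simp [hβ]
  have h := hnum.mul hden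
  rw [show 2 * (1 - α) * (1 / 2) = 1 - α by ring] at h
  refine h.congr' ?_
  filter_upwards [Ioo_mem_nhdsGT one_pos] with β hβ
  rw [div_mul_div_cancel₀ (neg_ne_zero.2 (log_neg hβ.1 hβ.2).ne),
    mul_log_div _ (sub_pos.2 hβ.2).ne', mul_log_div _ hβ.1.ne']
  ring

theorem F_limit_beta_zero (α : ℝ) (hα : α ∈ Set.Ioo (0 : ℝ) (1 / 2)) :
    Filter.Tendsto
      (fun β : ℝ =>
        2 * (α * Real.log (α / (1 - β)) + (1 - α) * Real.log ((1 - α) / β))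
          / (PhiInv α + PhiInv β) ^ 2)
      (𝓝[>] 0) (𝓝 (1 - α)) :=
  F_limit_beta_zero_general α
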